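/- arXiv:1104.2026 — 2 statements merged into one kernel-verified Lean document; each statement's English description precedes it below -/
import Mathlib

section
/- (Punishment along a deviation path.) Let G be a finite simple graph, C ⊆ V(G), Γ_i ⊆ N_i ∩ C for each i ∈ C, with the control relation reciprocal (j ∈ Γ_i iff i ∈ Γ_j). Fix a player i ∈ C and an action sequence s : ℕ → {0,1} whose first 0 occurs at time T (s_{t'} = 1 for t' < T, s_T = 0). Define the deviation path a : ℕ → V(G) → {0,1} recursively by a^{(t)}(i) = s_t, and for k ≠ i: a^{(t)}(k) = 1 iff k ∈ C and a^{(t')}(j) = 1 for every j ∈ Γ_k and every t' < t. Then every j ∈ C plays a^{(t)}(j) = 1 for all t ≤ T, and every punisher j ∈ Γ_i plays a^{(t)}(j) = 0 for all t > T. -/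
open Finset

/-! Before time `T` the deviator cannot be told apart from a cooperator, so by strong induction
on time nobody in `C` is ever triggered. At time `T` she defects, and reciprocity puts her in the
control set of each of her punishers, who therefore defect at every later time. -/

def FollowsGrimTrigger {V : Type*} (C : Finset V) (Γ : V → Finset V) (a : ℕ → V → Bool)
    (k : V) : Prop :=
  ∀ t, a t k = true ↔ k ∈ C ∧ ∀ j ∈ Γ k, ∀ t' < t, a t' j = true

section GrimTrigger

variable {V : Type*} {C : Finset V} {Γ : V → Finset V} {a : ℕ → V → Bool}

theorem FollowsGrimTrigger.eq_false_of_watched_defection {k j : V}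
    (hk : FollowsGrimTrigger C Γ a k) (hj : j ∈ Γ k) {T t : ℕ} (hT : a T j = false)
    (hTt : T < t) : a t k = false := by
  by_contra hkt
  have := ((hk t).mp (Bool.not_eq_false _ ▸ hkt)).2 j hj T hTt
  simp [hT] at this

theorem grimTrigger_cooperate_until_deviation {i : V} {T : ℕ}
    (hΓC : ∀ k ∈ C, Γ k ⊆ C) (hfollow : ∀ k, k ≠ i → FollowsGrimTrigger C Γ a k)
    (hcoop : ∀ t < T, a t i = true) :
    ∀ t ≤ T, ∀ j ∈ C, j ≠ i → a t j = true := by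
  intro t
  induction t using Nat.strong_induction_on with
  | _ t ih =>
    intro htT j hjC hji
    refine (hfollow j hji t).mpr ⟨hjC, fun k hk t' ht' => ?_⟩
    by_cases hki : k = i
    · exact hki ▸ hcoop t' (ht'.trans_le htT)
    · exact ih t' ht' (ht'.le.trans htT) k (hΓC j hjC hk) hki

end GrimTrigger

/-- Punishment along a deviation path: player `i ∈ C` unilaterally plays the
sequence `s`, whose first defection occurs at time `T`, while every other player
`k` follows the grim-trigger strategy on her control set `Γ k` (players outside
`C` always defect).  Then every grim-trigger follower in `C` collaborates at all
times `t ≤ T`, and every punisher `j ∈ Γ i` defects at all times `t > T`. -/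
theorem deviation_path_punishment {V : Type*} [Fintype V] [DecidableEq V]
    (G : SimpleGraph V) [DecidableRel G.Adj]
    (C : Finset V) (Γ : V → Finset V)
    (hΓ : ∀ i ∈ C, Γ i ⊆ G.neighborFinset i ∩ C)
    (hrec : ∀ i ∈ C, ∀ j ∈ C, (j ∈ Γ i ↔ i ∈ Γ j))
    (i : V) (hi : i ∈ C) (s : ℕ → Bool) (T : ℕ)
    (hs1 : ∀ t' < T, s t' = true) (hsT : s T = false)
    (a : ℕ → V → Bool)
    (hai : ∀ t, a t i = s t)
    (hak : ∀ k, k ≠ i → ∀ t,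
      (a t k = true ↔ (k ∈ C ∧ ∀ j ∈ Γ k, ∀ t' < t, a t' j = true))) :
    (∀ j ∈ C, j ≠ i → ∀ t ≤ T, a t j = true) ∧
      (∀ j ∈ Γ i, ∀ t, T < t → a t j = false) := by
  have hΓC : ∀ k ∈ C, Γ k ⊆ C := fun k hk => (hΓ k hk).trans inter_subset_right
  refine ⟨fun j hjC hji t htT =>
    grimTrigger_cooperate_until_deviation hΓC hak (fun t ht => (hai t).trans (hs1 t ht))
      t htT j hjC hji, fun j hj t hTt => ?_⟩
  have hjC : j ∈ C := hΓC i hi hj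
  have hji : j ≠ i := by
    rintro rfl
    exact G.irrefl ((G.mem_neighborFinset _ _).mp (mem_inter.mp (hΓ j hi hj)).1)
  exact FollowsGrimTrigger.eq_false_of_watched_defection (hak j hji) ((hrec i hi j hjC).mp hj)
    ((hai T).trans hsT) hTt
end

section
/- (Proposition 1, Collaborative Equilibria.) Let G be a finite simple graph with costs X_i > 0 and let (C,Γ) be a collaborative-equilibrium structure: Γ_i ⊆ N_i ∩ C, reciprocal control (j ∈ Γ_i iff i ∈ Γ_j), and X_i ≤ γ_i < X_i + 1 where γ_i = |Γ_i|, for all i ∈ C. Consider the strategy profile in which each i ∈ C plays the grim-trigger strategy on Γ_i and each i ∉ C plays 0 at all times. If the discount factor δ ∈ (0,1) satisfies X_i ≤ δ γ_i for every i ∈ C, then this profile is a Nash equilibrium of the repeated game: for every player i and every action sequence s : ℕ → {0,1}, the discounted utility of i along the deviation path (where all other players follow their strategies, evaluated recursively on the realized history) is at most her equilibrium utility, namely |N_i ∩ C| - X_i if i ∈ C and |N_i ∩ C| if i ∉ C. In particular, for δ sufficiently close to 1 the profile where players in C collaborate and players outside C defect is a Nash equilibrium. -/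
/-!
A player outside `C` meets no reciprocation, so she can never do better than free-riding on her
collaborating neighbours, which is what she gets by defecting throughout. A player `i ∈ C` who
defects for the first time at `T` saves `X i` at time `T`, and from `T + 1` on all `γ i` members of
`Γ i` (who monitor her, by reciprocity) have stopped contributing. In discounted averages the
deviation changes her utility by at most
`δ ^ T * ((1 - δ) * X i - δ * (γ i - X i)) = δ ^ T * (X i - δ * γ i) ≤ 0`.
-/

open Finset

def payoff {V : Type*} [Fintype V] (G : SimpleGraph V) [DecidableRel G.Adj]
    (X : V → ℝ) (s : V → Bool) (i : V) : ℝ :=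
  (∑ j ∈ G.neighborFinset i, if s j then (1 : ℝ) else 0) - (if s i then X i else 0)

section Discounting

variable {f : ℕ → ℝ} {δ B c : ℝ}

theorem summable_pow_mul_of_abs_le (hδ0 : 0 ≤ δ) (hδ1 : δ < 1) (hB : ∀ t, |f t| ≤ B) :
    Summable fun t => δ ^ t * f t :=
  .of_norm_bounded ((summable_geometric_of_lt_one hδ0 hδ1).mul_right B) fun t => by
    rw [Real.norm_eq_abs, abs_mul, abs_pow, abs_of_nonneg hδ0]
    exact mul_le_mul_of_nonneg_left (hB t) (pow_nonneg hδ0 t)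

theorem discounted_le_of_forall_le (hδ0 : 0 ≤ δ) (hδ1 : δ < 1) (hB : ∀ t, |f t| ≤ B)
    (hc : ∀ t, f t ≤ c) : (1 - δ) * ∑' t, δ ^ t * f t ≤ c := by
  have hsum : ∑' t, δ ^ t * f t ≤ ∑' t, δ ^ t * c :=
    (summable_pow_mul_of_abs_le hδ0 hδ1 hB).tsum_le_tsum
      (fun t => mul_le_mul_of_nonneg_left (hc t) (pow_nonneg hδ0 t))
      ((summable_geometric_of_lt_one hδ0 hδ1).mul_right c)
  calc (1 - δ) * ∑' t, δ ^ t * f t ≤ (1 - δ) * ∑' t, δ ^ t * c :=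
        mul_le_mul_of_nonneg_left hsum (by linarith)
    _ = c := by
      rw [tsum_mul_right, tsum_geometric_of_lt_one hδ0 hδ1]
      field_simp [(by linarith : (1 - δ) ≠ 0)]

theorem discounted_le_of_one_shot_gain {b ℓ : ℝ} (T : ℕ) (hδ0 : 0 ≤ δ) (hδ1 : δ < 1)
    (hB : ∀ t, |f t| ≤ B) (hbefore : ∀ t < T, f t ≤ c) (hat : f T ≤ c + b)
    (hafter : ∀ t, T < t → f t ≤ c - ℓ) (hgain : (1 - δ) * b ≤ δ * ℓ) :
    (1 - δ) * ∑' t, δ ^ t * f t ≤ c := by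
  set tail := ∑' k, δ ^ k * f (k + (T + 1))
  have hsplit : ∑' t, δ ^ t * f t
      = ∑ t ∈ range T, δ ^ t * f t + δ ^ T * f T + δ ^ (T + 1) * tail := by
    rw [← (summable_pow_mul_of_abs_le hδ0 hδ1 hB).sum_add_tsum_nat_add (T + 1), sum_range_succ,
      ← tsum_mul_left]
    exact congrArg _ (tsum_congr fun k => by ring)
  have hprefix : (1 - δ) * ∑ t ∈ range T, δ ^ t * f t ≤ (1 - δ ^ T) * c := by
    rw [← mul_neg_geom_sum, mul_assoc, sum_mul]
    refine mul_le_mul_of_nonneg_left (sum_le_sum fun t ht => ?_) (by linarith)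
    exact mul_le_mul_of_nonneg_left (hbefore t (mem_range.1 ht)) (pow_nonneg hδ0 t)
  have hnow : (1 - δ) * (δ ^ T * f T) ≤ (1 - δ) * (δ ^ T * (c + b)) :=
    mul_le_mul_of_nonneg_left (mul_le_mul_of_nonneg_left hat (pow_nonneg hδ0 T)) (by linarith)
  have htail : δ ^ (T + 1) * ((1 - δ) * tail) ≤ δ ^ (T + 1) * (c - ℓ) :=
    mul_le_mul_of_nonneg_left
      (discounted_le_of_forall_le hδ0 hδ1 (fun _ => hB _) fun _ => hafter _ (by omega))
      (pow_nonneg hδ0 _)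
  have hnet := mul_le_mul_of_nonneg_left hgain (pow_nonneg hδ0 T)
  rw [pow_succ] at htail
  rw [hsplit, pow_succ]
  linarith

end Discounting

section Payoff

variable {V : Type*} [Fintype V] (G : SimpleGraph V) [DecidableRel G.Adj] (X : V → ℝ)
  (s : V → Bool) (i : V)

theorem payoff_eq_card_sub :
    payoff G X s i = #{j ∈ G.neighborFinset i | s j = true} - (if s i then X i else 0) := by
  rw [payoff, sum_boole]

theorem abs_payoff_le : |payoff G X s i| ≤ G.degree i + |X i| := by
  rw [payoff_eq_card_sub]
  refine (abs_sub _ _).trans (add_le_add ?_ ?_)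
  · rw [Nat.abs_cast, ← G.card_neighborFinset_eq_degree]
    exact_mod_cast card_filter_le _ _
  · split_ifs <;> simp

variable {G X s i}

theorem payoff_le_of_contributors_subset {S : Finset V}
    (hS : {j ∈ G.neighborFinset i | s j = true} ⊆ S) :
    payoff G X s i ≤ #S - (if s i then X i else 0) := by
  rw [payoff_eq_card_sub]
  gcongr

end Payoff

/-- The equilibrium strategy of player `k`, as a condition on the realized path `a`: grim trigger
on `Γ k` if `k ∈ C`, constant defection otherwise. -/
def FollowsCollaborativeStrategy {V : Type*} (C : Finset V) (Γ : V → Finset V)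
    (a : ℕ → V → Bool) (k : V) : Prop :=
  ∀ t, a t k = true ↔ k ∈ C ∧ ∀ j ∈ Γ k, ∀ t' < t, a t' j = true

namespace FollowsCollaborativeStrategy

variable {V : Type*} {C : Finset V} {Γ : V → Finset V} {a : ℕ → V → Bool} {j k : V}
  {t T : ℕ}

theorem mem (hk : FollowsCollaborativeStrategy C Γ a k) (ht : a t k = true) : k ∈ C :=
  ((hk t).1 ht).1

theorem eq_false_of_lt (hk : FollowsCollaborativeStrategy C Γ a k) (hj : j ∈ Γ k)
    (hdefect : a T j = false) (hT : T < t) : a t k = false := by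
  rw [Bool.eq_false_iff]
  intro ht
  simpa [hdefect] using ((hk t).1 ht).2 j hj T hT

end FollowsCollaborativeStrategy

section Deviation

variable {V : Type*} [Fintype V] [DecidableEq V] {G : SimpleGraph V} [DecidableRel G.Adj]
  {X : V → ℝ} {C : Finset V} {Γ : V → Finset V} {a : ℕ → V → Bool} {i : V} {t T : ℕ}

theorem contributors_subset_inter (hak : ∀ k, k ≠ i → FollowsCollaborativeStrategy C Γ a k) :
    {j ∈ G.neighborFinset i | a t j = true} ⊆ G.neighborFinset i ∩ C := by
  intro j hj
  obtain ⟨hjN, hjt⟩ := mem_filter.1 hj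
  exact mem_inter.2 ⟨hjN, (hak j (G.ne_of_adj ((G.mem_neighborFinset i j).1 hjN)).symm).mem hjt⟩

theorem contributors_subset_sdiff (hak : ∀ k, k ≠ i → FollowsCollaborativeStrategy C Γ a k)
    (hrec : ∀ j ∈ Γ i, i ∈ Γ j) (hdefect : a T i = false) (hT : T < t) :
    {j ∈ G.neighborFinset i | a t j = true} ⊆ (G.neighborFinset i ∩ C) \ Γ i := by
  intro j hj
  refine mem_sdiff.2 ⟨contributors_subset_inter hak hj, fun hjΓ => ?_⟩
  obtain ⟨hjN, hjt⟩ := mem_filter.1 hj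
  have hji : j ≠ i := (G.ne_of_adj ((G.mem_neighborFinset i j).1 hjN)).symm
  rw [(hak j hji).eq_false_of_lt (hrec j hjΓ) hdefect hT] at hjt
  exact Bool.false_ne_true hjt

theorem payoff_le_after_defection (hak : ∀ k, k ≠ i → FollowsCollaborativeStrategy C Γ a k)
    (hΓ : Γ i ⊆ G.neighborFinset i ∩ C) (hrec : ∀ j ∈ Γ i, i ∈ Γ j) (hdefect : a T i = false)
    (hT : T < t) :
    payoff G X (a t) i ≤ #(G.neighborFinset i ∩ C) - #(Γ i) - (if a t i then X i else 0) := by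
  have h := payoff_le_of_contributors_subset (X := X)
    (contributors_subset_sdiff (G := G) hak hrec hdefect hT)
  rwa [card_sdiff_of_subset hΓ, Nat.cast_sub (card_le_card hΓ)] at h

end Deviation

theorem collaborative_equilibrium_general {V : Type*} [Fintype V] [DecidableEq V]
    (G : SimpleGraph V) [DecidableRel G.Adj] (X : V → ℝ) (hX : ∀ i, 0 < X i)
    (C : Finset V) (Γ : V → Finset V)
    (hΓ : ∀ i ∈ C, Γ i ⊆ G.neighborFinset i ∩ C)
    (hrec : ∀ i ∈ C, ∀ j ∈ C, (j ∈ Γ i ↔ i ∈ Γ j))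
    (δ : ℝ) (hδ0 : 0 < δ) (hδ1 : δ < 1)
    (hδX : ∀ i ∈ C, X i ≤ δ * ((Γ i).card : ℝ))
    (i : V) (a : ℕ → V → Bool)
    (hak : ∀ k, k ≠ i → ∀ t,
      (a t k = true ↔ (k ∈ C ∧ ∀ j ∈ Γ k, ∀ t' < t, a t' j = true))) :
    (1 - δ) * ∑' t : ℕ, δ ^ t * payoff G X (a t) i ≤
      ((G.neighborFinset i ∩ C).card : ℝ) - (if i ∈ C then X i else 0) := by
  have hB t := abs_payoff_le G X (a t) i
  have hbound t : payoff G X (a t) i ≤ #(G.neighborFinset i ∩ C) - (if a t i then X i else 0) :=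
    payoff_le_of_contributors_subset (contributors_subset_inter hak)
  have hcost t : 0 ≤ (if a t i then X i else 0) := ite_nonneg (hX i).le le_rfl
  by_cases hiC : i ∈ C
  · rw [if_pos hiC]
    by_cases hdev : ∃ T, a T i = false
    · have hmonitors j (hj : j ∈ Γ i) : i ∈ Γ j := (hrec i hiC j (mem_inter.1 (hΓ i hiC hj)).2).1 hj
      refine discounted_le_of_one_shot_gain (Nat.find hdev) (b := X i) (ℓ := #(Γ i) - X i)
        hδ0.le hδ1 hB (fun t ht => ?_) ?_ (fun t ht => ?_) (by linarith [hδX i hiC])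
      · simpa [Nat.find_min hdev ht] using hbound t
      · simpa [Nat.find_spec hdev] using hbound (Nat.find hdev)
      · have hpunished := payoff_le_after_defection (X := X) hak (hΓ i hiC) hmonitors
          (Nat.find_spec hdev) ht
        linarith [hcost t]
    · push Not at hdev
      exact discounted_le_of_forall_le hδ0.le hδ1 hB fun t => by simpa [hdev t] using hbound t
  · rw [if_neg hiC, sub_zero]
    exact discounted_le_of_forall_le hδ0.le hδ1 hB fun t => by linarith [hbound t, hcost t]

/-- Proposition 1 (Collaborative Equilibria).  Let `(C,Γ)` be a
collaborative-equilibrium structure: `Γ i ⊆ N_i ∩ C`, reciprocal control, and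
`X i ≤ |Γ i| < X i + 1` for all `i ∈ C`.  Consider the profile where each
`i ∈ C` plays grim trigger on `Γ i` and each `i ∉ C` always defects.  If the
discount factor satisfies `X i ≤ δ·|Γ i|` for every `i ∈ C` (as holds for `δ`
close enough to `1`), then no player can profit by unilaterally deviating: for
any player `i` and any action sequence `s`, the discounted utility of `i` along
the resulting deviation path (all other players following their strategies,
evaluated recursively on the realized history) is at most her equilibrium
utility, `|N_i ∩ C| - X i` if `i ∈ C` and `|N_i ∩ C|` if `i ∉ C`. -/
theorem collaborative_equilibrium {V : Type*} [Fintype V] [DecidableEq V]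
    (G : SimpleGraph V) [DecidableRel G.Adj] (X : V → ℝ) (hX : ∀ i, 0 < X i)
    (C : Finset V) (Γ : V → Finset V)
    (hΓ : ∀ i ∈ C, Γ i ⊆ G.neighborFinset i ∩ C)
    (hrec : ∀ i ∈ C, ∀ j ∈ C, (j ∈ Γ i ↔ i ∈ Γ j))
    (hcard : ∀ i ∈ C, X i ≤ ((Γ i).card : ℝ) ∧ ((Γ i).card : ℝ) < X i + 1)
    (δ : ℝ) (hδ0 : 0 < δ) (hδ1 : δ < 1)
    (hδX : ∀ i ∈ C, X i ≤ δ * ((Γ i).card : ℝ))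
    (i : V) (s : ℕ → Bool) (a : ℕ → V → Bool)
    (hai : ∀ t, a t i = s t)
    (hak : ∀ k, k ≠ i → ∀ t,
      (a t k = true ↔ (k ∈ C ∧ ∀ j ∈ Γ k, ∀ t' < t, a t' j = true))) :
    (1 - δ) * ∑' t : ℕ, δ ^ t * payoff G X (a t) i ≤
      ((G.neighborFinset i ∩ C).card : ℝ) - (if i ∈ C then X i else 0) :=
  collaborative_equilibrium_general G X hX C Γ hΓ hrec δ hδ0 hδ1 hδX i a hak
end
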